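/- Let p(x) = (1/√(2π)) e^{−x²/2}, let M > 0, let n ≥ 1, and let a = (a_{jk})_{j,k=0}^{n−1} be a real n × n matrix. Then Σ det[ p(a_{jk} + h_k M) ]_{j,k=0}^{n−1}, the sum over all (h_0, …, h_{n−1}) ∈ ℤ^n with h_0 + ⋯ + h_{n−1} = 0, equals (M/(2π)) ∫_0^{2π/M} det[ g(a_{jk}, θ) ]_{j,k=0}^{n−1} dθ, where g(x, θ) = Σ_{h ∈ ℤ} p(x + hM) e^{iMhθ}; all series converge absolutely. -/

import Mathlib

/-!
Each entry of the kernel matrix is an absolutely convergent series over `ℤ`, so expanding the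
determinant multilinearly in its columns gives
`det[g(a_jk, θ)] = Σ_{h ∈ ℤⁿ} det[p(a_jk + h_k M)] e^{iMθ(h_0 + ⋯ + h_{n-1})}`,
again absolutely convergent, by the Gaussian decay of `p`. Integrating term by term over one
period `[0, 2π/M]`, the characters `θ ↦ e^{iMcθ}` with `c ≠ 0` integrate to zero, so only the
terms with `h_0 + ⋯ + h_{n-1} = 0` survive.
-/

open Finset MeasureTheory

/-- The standard Gaussian density. -/
noncomputable def gaussDen (x : ℝ) : ℝ :=
  (1 / Real.sqrt (2 * Real.pi)) * Real.exp (-x ^ 2 / 2)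

/-- The theta-type kernel `g(x, θ) = Σ_{h∈ℤ} p(x + hM) e^{iMhθ}`. -/
noncomputable def thetaKer (M x θ : ℝ) : ℂ :=
  ∑' h : ℤ, (gaussDen (x + h * M) : ℂ) * Complex.exp (Complex.I * M * h * θ)

lemma gaussDen_nonneg (x : ℝ) : 0 ≤ gaussDen x := by
  unfold gaussDen; positivity

lemma summable_gaussDen_add_int_mul {M : ℝ} (hM : M ≠ 0) (x : ℝ) :
    Summable fun h : ℤ => gaussDen (x + h * M) := by
  -- `e^{-(x + hM)²/2} ≤ e^{-π(T h² - 2S|h|)}` with `T = M²/2π`, `S = |xM|/2π`, a Jacobi theta bound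
  have hT : 0 < M ^ 2 / (2 * Real.pi) := by positivity
  refine ((summable_pow_mul_jacobiTheta₂_term_bound (|x * M| / (2 * Real.pi)) hT 0)
    |>.of_nonneg_of_le (fun _ => Real.exp_nonneg _) fun h => ?_).mul_left _
  rw [pow_zero, one_mul, Real.exp_le_exp]
  have hpi := Real.pi_pos
  have hxMh : -(x * M * h) ≤ |x * M| * |(h : ℝ)| := by
    rw [← abs_mul]; exact neg_le_abs _
  rw [Int.cast_abs]
  field_simp
  nlinarith [sq_nonneg x]

lemma norm_exp_I_mul_int (M θ : ℝ) (c : ℤ) : ‖Complex.exp (Complex.I * M * c * θ)‖ = 1 := by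
  rw [show Complex.I * M * c * θ = ((M * c * θ : ℝ) : ℂ) * Complex.I by push_cast; ring,
    Complex.norm_exp_ofReal_mul_I]

lemma summable_norm_gaussDen_mul_exp {M : ℝ} (hM : M ≠ 0) (x θ : ℝ) :
    Summable fun h : ℤ =>
      ‖(gaussDen (x + h * M) : ℂ) * Complex.exp (Complex.I * M * h * θ)‖ := by
  simpa [norm_exp_I_mul_int, abs_of_nonneg (gaussDen_nonneg _)]
    using summable_gaussDen_add_int_mul hM x

section PiProduct

variable {R β : Type*} [NormedCommRing R]

lemma prod_cons_eq_prod_consEquiv {n : ℕ} (c : Fin (n + 1) → β → R) (z : β × (Fin n → β)) :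
    c 0 z.1 * ∏ k : Fin n, c k.succ (z.2 k) = ∏ k, c k (Fin.consEquiv (fun _ => β) z k) := by
  simp [Fin.prod_univ_succ, Fin.consEquiv]

lemma summable_norm_pi_prod {n : ℕ} (c : Fin n → β → R) (hc : ∀ k, Summable fun b => ‖c k b‖) :
    Summable fun b : Fin n → β => ‖∏ k, c k (b k)‖ := by
  induction n with
  | zero => exact .of_finite
  | succ n ih =>
    refine (Fin.consEquiv fun _ => β).summable_iff.mp <|
      ((hc 0).mul_norm (ih _ fun k => hc k.succ)).congr fun z => ?_
    rw [Function.comp_apply, ← prod_cons_eq_prod_consEquiv]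

lemma prod_tsum_eq_tsum_pi_prod [CompleteSpace R] {n : ℕ} (c : Fin n → β → R)
    (hc : ∀ k, Summable fun b => ‖c k b‖) :
    ∏ k, ∑' b, c k b = ∑' b : Fin n → β, ∏ k, c k (b k) := by
  induction n with
  | zero => simp
  | succ n ih =>
    rw [← (Fin.consEquiv fun _ => β).tsum_eq, Fin.prod_univ_succ, ih _ fun k => hc k.succ,
      tsum_mul_tsum_of_summable_norm (hc 0) (summable_norm_pi_prod _ fun k => hc k.succ)]
    exact tsum_congr (prod_cons_eq_prod_consEquiv c)

lemma Matrix.summable_norm_det_of_summable_norm {n : ℕ} (f : Fin n → Fin n → β → R)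
    (hf : ∀ j k, Summable fun b => ‖f j k b‖) :
    Summable fun b : Fin n → β => ‖(Matrix.of fun j k => f j k (b k)).det‖ := by
  have hσ : ∀ σ : Equiv.Perm (Fin n), Summable fun b : Fin n → β => ‖∏ k, f (σ k) k (b k)‖ :=
    fun σ => summable_norm_pi_prod _ fun k => hf (σ k) k
  have hsum := summable_sum (s := univ) fun σ _ => hσ σ
  refine .of_nonneg_of_le (fun _ => norm_nonneg _) (fun b => ?_) hsum
  rw [Matrix.det_apply]
  exact (norm_sum_le _ _).trans (sum_le_sum fun σ _ => (norm_units_zsmul _ _).le)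

lemma Matrix.det_of_tsum [CompleteSpace R] {n : ℕ} (f : Fin n → Fin n → β → R)
    (hf : ∀ j k, Summable fun b => ‖f j k b‖) :
    (Matrix.of fun j k => ∑' b, f j k b).det =
      ∑' b : Fin n → β, (Matrix.of fun j k => f j k (b k)).det := by
  have hσ : ∀ σ : Equiv.Perm (Fin n), Summable fun b : Fin n → β => ∏ k, f (σ k) k (b k) :=
    fun σ => (summable_norm_pi_prod _ fun k => hf (σ k) k).of_norm
  simp only [Matrix.det_apply, Matrix.of_apply]
  rw [Summable.tsum_finsetSum fun σ _ => (hσ σ).const_smul _]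
  refine sum_congr rfl fun σ _ => ?_
  rw [prod_tsum_eq_tsum_pi_prod _ fun k => hf (σ k) k, tsum_const_smul']

end PiProduct

lemma integral_exp_I_mul_int {M : ℝ} (hM : M ≠ 0) (c : ℤ) :
    ∫ θ in (0 : ℝ)..2 * Real.pi / M, Complex.exp (Complex.I * M * c * θ) =
      if c = 0 then ((2 * Real.pi / M : ℝ) : ℂ) else 0 := by
  split_ifs with hc
  · simp [hc]
  have hz : Complex.I * M * c ≠ 0 := by simp [hM, hc, Complex.I_ne_zero]
  have hperiod :
      Complex.I * M * c * ((2 * Real.pi / M : ℝ) : ℂ) = c * (2 * Real.pi * Complex.I) := by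
    have hM' : (M : ℂ) ≠ 0 := by exact_mod_cast hM
    push_cast; field_simp
  rw [integral_exp_mul_complex hz, hperiod, Complex.exp_int_mul_two_pi_mul_I]
  simp

lemma integral_tsum_mul_exp_I_mul_int {ι : Type*} [Countable ι] {M : ℝ} (hM : M ≠ 0)
    {D : ι → ℂ} (hD : Summable fun i => ‖D i‖) (c : ι → ℤ) :
    ∫ θ in (0 : ℝ)..2 * Real.pi / M, ∑' i, D i * Complex.exp (Complex.I * M * c i * θ) =
      ((2 * Real.pi / M : ℝ) : ℂ) * ∑' i : {i // c i = 0}, D i := by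
  have hnorm : ∀ i (θ : ℝ), ‖D i * Complex.exp (Complex.I * M * c i * θ)‖ = ‖D i‖ := fun i θ => by
    rw [norm_mul, norm_exp_I_mul_int, mul_one]
  have hcont : ∀ i, Continuous fun θ : ℝ => D i * Complex.exp (Complex.I * M * c i * θ) :=
    fun i => by fun_prop
  have hsum := intervalIntegral.hasSum_integral_of_dominated_convergence (μ := volume)
    (a := 0) (b := 2 * Real.pi / M) (fun i _ => ‖D i‖) (fun i => (hcont i).aestronglyMeasurable)
    (fun i => ae_of_all _ fun θ _ => (hnorm i θ).le) (ae_of_all _ fun _ _ => hD)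
    intervalIntegrable_const
    (ae_of_all _ fun θ _ => (hD.congr fun i => (hnorm i θ).symm).of_norm.hasSum)
  calc _ = ∑' i, ∫ θ in (0 : ℝ)..2 * Real.pi / M, D i * Complex.exp (Complex.I * M * c i * θ) :=
        hsum.tsum_eq.symm
    _ = ∑' i, {i | c i = 0}.indicator (fun i => ((2 * Real.pi / M : ℝ) : ℂ) * D i) i := by
        refine tsum_congr fun i => ?_
        rw [intervalIntegral.integral_const_mul, integral_exp_I_mul_int hM, Set.indicator_apply]
        split_ifs <;> simp_all [mul_comm]
    _ = _ := by rw [← _root_.tsum_subtype, tsum_mul_left]; rfl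

lemma det_thetaKer_eq_tsum {M : ℝ} (hM : M ≠ 0) {n : ℕ} (a : Fin n → Fin n → ℝ) (θ : ℝ) :
    (Matrix.of fun j k => thetaKer M (a j k) θ).det =
      ∑' h : Fin n → ℤ, ((Matrix.of fun j k => gaussDen (a j k + h k * M)).det : ℂ) *
        Complex.exp (Complex.I * M * (∑ k, h k : ℤ) * θ) := by
  simp only [thetaKer]
  rw [Matrix.det_of_tsum _ fun j k => summable_norm_gaussDen_mul_exp hM _ θ]
  refine tsum_congr fun h => ?_
  have hcol : (Matrix.of fun j k => (gaussDen (a j k + h k * M) : ℂ) *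
      Complex.exp (Complex.I * M * (h k) * θ)) = Matrix.of fun j k =>
        Complex.exp (Complex.I * M * (h k) * θ) *
          Complex.ofRealHom.mapMatrix (Matrix.of fun j k => gaussDen (a j k + h k * M)) j k := by
    ext j k; simp [mul_comm]
  rw [hcol, Matrix.det_mul_row, ← RingHom.map_det, ← Complex.exp_sum, mul_comm]
  congr 2
  push_cast
  rw [← sum_mul, ← mul_sum]

theorem stmt_10_general (M : ℝ) (hM : 0 < M) (n : ℕ) (a : Fin n → Fin n → ℝ) :
    (∀ x θ : ℝ, Summable (fun h : ℤ =>
      ‖(gaussDen (x + h * M) : ℂ) * Complex.exp (Complex.I * M * h * θ)‖)) ∧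
    Summable (fun h : {h : Fin n → ℤ // ∑ j, h j = 0} =>
      |Matrix.det (Matrix.of fun j k : Fin n => gaussDen (a j k + (h.1 k : ℝ) * M))|) ∧
    ((∑' h : {h : Fin n → ℤ // ∑ j, h j = 0},
        Matrix.det (Matrix.of fun j k : Fin n => gaussDen (a j k + (h.1 k : ℝ) * M)) : ℝ) : ℂ)
      = ((M / (2 * Real.pi) : ℝ) : ℂ) *
        ∫ θ in (0 : ℝ)..(2 * Real.pi / M),
          Matrix.det (Matrix.of fun j k : Fin n => thetaKer M (a j k) θ) := by
  have hcol : ∀ j k : Fin n, Summable fun h : ℤ => ‖gaussDen (a j k + h * M)‖ := fun j k => by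
    simpa [abs_of_nonneg (gaussDen_nonneg _)] using summable_gaussDen_add_int_mul hM.ne' (a j k)
  have hdet := Matrix.summable_norm_det_of_summable_norm _ hcol
  refine ⟨summable_norm_gaussDen_mul_exp hM.ne', hdet.subtype _, ?_⟩
  simp_rw [det_thetaKer_eq_tsum hM.ne']
  rw [integral_tsum_mul_exp_I_mul_int hM.ne' (by simpa using hdet), Complex.ofReal_tsum,
    ← mul_assoc, ← Complex.ofReal_mul, div_mul_div_cancel₀ Real.two_pi_pos.ne', div_self hM.ne',
    Complex.ofReal_one, one_mul]

/-- The constrained reflection sum of Gaussian determinants equals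
`(M/2π) ∫_0^{2π/M} det[g(a_{jk}, θ)] dθ`; all series converge absolutely. -/
theorem stmt_10 (M : ℝ) (hM : 0 < M) (n : ℕ) (hn : 1 ≤ n) (a : Fin n → Fin n → ℝ) :
    (∀ x θ : ℝ, Summable (fun h : ℤ =>
      ‖(gaussDen (x + h * M) : ℂ) * Complex.exp (Complex.I * M * h * θ)‖)) ∧
    Summable (fun h : {h : Fin n → ℤ // ∑ j, h j = 0} =>
      |Matrix.det (Matrix.of fun j k : Fin n => gaussDen (a j k + (h.1 k : ℝ) * M))|) ∧
    ((∑' h : {h : Fin n → ℤ // ∑ j, h j = 0},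
        Matrix.det (Matrix.of fun j k : Fin n => gaussDen (a j k + (h.1 k : ℝ) * M)) : ℝ) : ℂ)
      = ((M / (2 * Real.pi) : ℝ) : ℂ) *
        ∫ θ in (0 : ℝ)..(2 * Real.pi / M),
          Matrix.det (Matrix.of fun j k : Fin n => thetaKer M (a j k) θ) :=
  stmt_10_general M hM n a
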